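/- arXiv:1612.08559 — 3 statements merged into one kernel-verified Lean document; each statement's English description precedes it below -/
import Mathlib

section
/- Suppose H is a hypergraph all of whose edges have at most k vertices. Let X = e(H_p), μ = E X, and for r > 0 let X_r = max{e(G) : G ⊆ H_p and Δ₁(G) ≤ r}. Then for all p ∈ [0,1] and all r, t > 0: Pr(X_r ≥ μ + t/2) ≤ exp(−φ(t/μ)·μ/(4kr)) ≤ exp(−min{t, t²/μ}/(12kr)). -/
/-!
Write `C = k r`. If `X_r ≥ s`, fix an optimal subgraph `G` (maximum degree at most `r`, `X_r`
edges, all present in `H_p`). For each edge `α` of `G`, deleting from `H` every edge that meets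
`α` removes at most `|α| r ≤ C` edges of `G`, so the resulting hypergraph `H - α` still has
`X_r ≥ s - C`; this event depends only on the vertices outside `α`, hence is independent of
`α ⊆ V_p`. Counting these certificates gives
`s · Pr(X_r(H) ≥ s) ≤ ∑_α p^|α| · Pr(X_r(H - α) ≥ s - C)`,
and iterating `n + 1` times, where `w + n C = μ + t/2` with `w ∈ [μ, μ + C]`, yields
`Pr(X_r ≥ μ + t/2) ≤ ∏_{i ≤ n} μ / (w + i C)`. Since `φ' = log (1 + ·)`, the sum
`∑ log ((w + i C)/μ)` is a Riemann sum dominating `μ φ(t/2μ) / C ≥ μ φ(t/μ) / (4 C)`.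
The second inequality is `φ(x) ≥ x² / (x + 2) ≥ min(x, x²) / 3`.
-/

open MeasureTheory Real
open scoped ENNReal Classical

noncomputable section

namespace UT

/-- `φ(x) = (1+x)·log(1+x) − x`. -/
def phi (x : ℝ) : ℝ := (1 + x) * Real.log (1 + x) - x

/-- Bernoulli measure on `Bool` with success probability `p` (intended for `p ∈ [0,1]`). -/
def bern (p : ℝ) : Measure Bool :=
  (PMF.bernoulli (min (Real.toNNReal p) 1) (min_le_right _ _)).toMeasure

instance (p : ℝ) : IsProbabilityMeasure (bern p) := by
  unfold bern; infer_instance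

/-- The Bernoulli(`p`) product measure on subsets of `V` (encoded as `V → Bool`):
each vertex is kept independently with probability `p`. -/
def perc (V : Type) [Fintype V] (p : ℝ) : Measure (V → Bool) :=
  Measure.pi fun _ => bern p

/-- The edge set of the induced random subhypergraph `H_p`, for the outcome `ω`. -/
def HpEdges {V : Type} (H : Finset (Finset V)) (ω : V → Bool) : Finset (Finset V) :=
  H.filter fun e => ∀ v ∈ e, ω v = true

/-- `X = e(H_p)`, the number of induced edges, as a real-valued random variable. -/
def XE {V : Type} (H : Finset (Finset V)) (ω : V → Bool) : ℝ :=
  ((HpEdges H ω).card : ℝ)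

/-- `μ = E e(H_p)`. -/
def mu {V : Type} [Fintype V] (H : Finset (Finset V)) (p : ℝ) : ℝ :=
  ∫ ω, XE H ω ∂(perc V p)

/-- `Pr(e(H_p) ≥ c)`. -/
def pr {V : Type} [Fintype V] (H : Finset (Finset V)) (p c : ℝ) : ℝ :=
  (perc V p {ω | c ≤ XE H ω}).toReal

/-- `Var e(H_p)`. -/
def hvar {V : Type} [Fintype V] (H : Finset (Finset V)) (p : ℝ) : ℝ :=
  ProbabilityTheory.variance (XE H) (perc V p)

/-- `Δ_j(H)`: the maximum, over `j`-element vertex sets `S`, of the number of edges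
of `H` containing `S`. -/
def maxDegj {V : Type} [Fintype V] (H : Finset (Finset V)) (j : ℕ) : ℕ :=
  (Finset.univ.filter fun S : Finset V => S.card = j).sup fun S =>
    (H.filter fun f => S ⊆ f).card

/-- Property `𝔛(H, D, x)`: there is `W ⊆ V(H)` with `|W| ≤ D·max{√x, 1}` and
`e(H[W]) ≥ x`. -/
def propX {V : Type} [Fintype V] (H : Finset (Finset V)) (D x : ℝ) : Prop :=
  ∃ W : Finset V, (W.card : ℝ) ≤ D * max (Real.sqrt x) 1 ∧
    x ≤ ((H.filter fun e => e ⊆ W).card : ℝ)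

/-- The degree `|Γ_v(G)|` of vertex `v` in the hypergraph `G`. -/
def deg {V : Type} (G : Finset (Finset V)) (v : V) : ℕ :=
  (G.filter fun f => v ∈ f).card

/-- `Δ₁(G)`, the maximum vertex degree. -/
def maxDeg {V : Type} [Fintype V] (G : Finset (Finset V)) : ℕ :=
  Finset.univ.sup (deg G)

/-- The vertex set of a star: the union of its edges. -/
def starVtx {V : Type} (W : Finset (Finset V)) : Finset V := W.sup id

/-- `M_r(G)`: the maximum size of a collection of `r`-stars in `G` whose vertex sets
are pairwise disjoint. An `r`-star is a pair `S = (v, W)` with `W ⊆ Γ_v(G)` and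
`|W| = ⌈r⌉`. -/
def Mr {V : Type} (G : Finset (Finset V)) (r : ℝ) : ℕ :=
  sSup { m : ℕ | ∃ M : Finset (V × Finset (Finset V)),
    (∀ S ∈ M, S.2 ⊆ G.filter (fun f => S.1 ∈ f) ∧ S.2.card = Nat.ceil r) ∧
    (∀ S ∈ M, ∀ T ∈ M, S ≠ T → Disjoint (starVtx S.2) (starVtx T.2)) ∧
    m = M.card }

/-- `X_r`: the maximum number of edges of a subhypergraph `G ⊆ H_p` with maximum
degree `Δ₁(G) ≤ r`. -/
def Xr {V : Type} (H : Finset (Finset V)) (r : ℝ) (ω : V → Bool) : ℝ :=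
  sSup { z : ℝ | ∃ G : Finset (Finset V), G ⊆ HpEdges H ω ∧
    (∀ v : V, (deg G v : ℝ) ≤ r) ∧ z = (G.card : ℝ) }

/-- `s = log(e/p^γ)`. -/
def sP (p γ : ℝ) : ℝ := Real.log (Real.exp 1 / p ^ γ)

/-- The event `𝒯(β, γ, r, t)` (with `r_j = 2^j·r` and `s = log(e/p^γ)`). -/
def eventT {V : Type} (H : Finset (Finset V)) (p β γ r t : ℝ) (ω : V → Bool) : Prop :=
  (∀ j : ℕ, (2:ℝ) ^ j * r < Real.sqrt t / sP p γ →
    ((Mr (HpEdges H ω) ((2:ℝ) ^ j * r) : ℝ) < β * Real.sqrt t * sP p γ / ((2:ℝ) ^ j * r))) ∧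
  (∀ j : ℕ, Real.sqrt t / sP p γ ≤ (2:ℝ) ^ j * r →
    ((Mr (HpEdges H ω) ((2:ℝ) ^ j * r) : ℝ) < β * Real.sqrt t / ((2:ℝ) ^ j * r)))

/-- `s` is an arithmetic progression of length `k` in `{0, 1, …, n−1}`. -/
def isAP (k n : ℕ) (s : Finset (Fin n)) : Prop :=
  ∃ a d : ℕ, 0 < d ∧
    s.image (fun x : Fin n => (x : ℕ)) = (Finset.range k).image fun i => a + i * d

/-- The `k`-uniform hypergraph whose edges are the arithmetic progressions of
length `k` in `{0, 1, …, n−1}` (a copy of `[n]`). -/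
def apH (k n : ℕ) : Finset (Finset (Fin n)) :=
  Finset.univ.filter (isAP k n)

/-- `Z_C`: the maximum of `Σ_{α∈J} Y_α` over all `J ⊆ I` satisfying
`max_{β∈J} Σ_{α∈J, α∼β} Y_α ≤ C`. -/
def ZC {Ω I : Type} [Fintype I] (Y : I → Ω → ℝ) (rel : I → I → Prop) (C : ℝ) (ω : Ω) : ℝ :=
  sSup { z : ℝ | ∃ J : Finset I,
    (∀ β ∈ J, ∑ α ∈ J.filter (fun α => rel α β), Y α ω ≤ C) ∧
    z = ∑ α ∈ J, Y α ω }

/-- `Z`: the maximum number of events occurring with pairwise disjoint certificates. -/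
def Zdisj {M : ℕ} {Ω : Fin M → Type} {I : Type} [Fintype I]
    (E : I → Set (∀ i, Ω i)) (ω : ∀ i, Ω i) : ℕ :=
  sSup { m : ℕ | ∃ J : Finset I, ∃ K : I → Finset (Fin M),
    (∀ α ∈ J, ∀ β ∈ J, α ≠ β → Disjoint (K α) (K β)) ∧
    (∀ α ∈ J, ∀ ω' : ∀ i, Ω i, (∀ i ∈ K α, ω' i = ω i) → ω' ∈ E α) ∧
    m = J.card }


section Phi

lemma phi_zero : phi 0 = 0 := by simp [phi]

lemma hasDerivAt_phi {x : ℝ} (hx : -1 < x) : HasDerivAt phi (log (1 + x)) x := by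
  have h1 : 1 + x ≠ 0 := by linarith
  have hlog : HasDerivAt (fun y => log (1 + y)) (1 / (1 + x)) x := by
    simpa using ((hasDerivAt_id x).const_add 1).log h1
  refine ((((hasDerivAt_id x).const_add 1).mul hlog).sub (hasDerivAt_id x)).congr_deriv ?_
  rw [id_eq, mul_one_div_cancel h1]
  ring

lemma phi_sub_phi_le {x y : ℝ} (hx : -1 < x) (hxy : x ≤ y) :
    phi y - phi x ≤ (y - x) * log (1 + y) := by
  have hx1 : 0 < 1 + x := by linarith
  have hy1 : 0 < 1 + y := by linarith
  have hlog := log_le_sub_one_of_pos (div_pos hy1 hx1)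
  rw [log_div hy1.ne' hx1.ne'] at hlog
  have key : (1 + x) * (log (1 + y) - log (1 + x)) ≤ y - x := by
    calc _ ≤ (1 + x) * ((1 + y) / (1 + x) - 1) := mul_le_mul_of_nonneg_left hlog hx1.le
      _ = y - x := by field_simp; ring
  simp only [phi]
  linarith

lemma phi_le_four_mul_phi_half {x : ℝ} (hx : 0 ≤ x) : phi x ≤ 4 * phi (x / 2) := by
  set g : ℝ → ℝ := fun y => 4 * phi (y / 2) - phi y
  have hg (y : ℝ) (hy : 0 ≤ y) :
      HasDerivAt g (2 * log (1 + y / 2) - log (1 + y)) y := by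
    refine (((hasDerivAt_phi (by linarith : -1 < y / 2)).comp y
      ((hasDerivAt_id y).div_const 2)).const_mul 4 |>.sub
        (hasDerivAt_phi (by linarith))).congr_deriv ?_
    ring
  have hmono : MonotoneOn g (Set.Ici 0) := by
    refine monotoneOn_of_hasDerivWithinAt_nonneg (convex_Ici 0)
      (fun y hy => (hg y hy).continuousAt.continuousWithinAt)
      (fun y hy => (hg y (interior_subset hy)).hasDerivWithinAt) fun y hy => ?_
    rw [interior_Ici] at hy
    have hsq : log (1 + y) ≤ log ((1 + y / 2) ^ 2) :=
      log_le_log (by linarith [hy.out]) (by nlinarith [sq_nonneg y])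
    rw [log_pow] at hsq
    push_cast at hsq
    linarith
  have := hmono Set.self_mem_Ici hx hx
  simp only [g, zero_div, phi_zero] at this
  linarith

lemma min_le_three_mul_phi {x : ℝ} (hx : 0 ≤ x) : min x (x ^ 2) ≤ 3 * phi x := by
  have hlog := le_log_one_add_of_nonneg hx
  have hphi : x ^ 2 / (x + 2) ≤ phi x := by
    have : (1 + x) * (2 * x / (x + 2)) - x = x ^ 2 / (x + 2) := by field_simp; ring
    simp only [phi]
    nlinarith [mul_le_mul_of_nonneg_left hlog (by linarith : (0 : ℝ) ≤ 1 + x)]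
  rw [div_le_iff₀ (by linarith)] at hphi
  rcases le_total x 1 with h | h
  · nlinarith [min_le_right x (x ^ 2)]
  · nlinarith [min_le_left x (x ^ 2)]

lemma min_le_three_mul_phi_div_mul {μ t : ℝ} (hμ : 0 ≤ μ) (ht : 0 ≤ t) :
    min t (t ^ 2 / μ) ≤ 3 * (phi (t / μ) * μ) := by
  rcases hμ.eq_or_lt with rfl | hμ
  · simp [ht]
  calc min t (t ^ 2 / μ) = μ * min (t / μ) ((t / μ) ^ 2) := by
        rw [mul_min_of_nonneg _ _ hμ.le]
        congr 1 <;> field_simp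
    _ ≤ μ * (3 * phi (t / μ)) :=
        mul_le_mul_of_nonneg_left (min_le_three_mul_phi (by positivity)) hμ.le
    _ = 3 * (phi (t / μ) * μ) := by ring

lemma phi_le_mul_sum_log {z c : ℝ} (hz : 0 ≤ z) (hzc : z ≤ c) (n : ℕ) :
    phi (z + n * c) ≤ c * ∑ i ∈ Finset.range (n + 1), log (1 + (z + i * c)) := by
  induction n with
  | zero =>
    have hlog : 0 ≤ log (1 + z) := log_nonneg (by linarith)
    have := phi_sub_phi_le (by norm_num) hz
    simp only [phi_zero, sub_zero] at this
    simp only [Nat.cast_zero, zero_mul, add_zero, zero_add, Finset.sum_range_one]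
    nlinarith
  | succ n ih =>
    have hstep := phi_sub_phi_le (x := z + n * c) (y := z + (n + 1 : ℕ) * c)
      (by nlinarith) (by push_cast; nlinarith)
    rw [Finset.sum_range_succ, mul_add]
    have hcast : z + ((n + 1 : ℕ) : ℝ) * c - (z + n * c) = c := by push_cast; ring
    rw [hcast] at hstep
    linarith

lemma prod_div_le_exp_neg_phi {μ C w : ℝ} (hμ : 0 < μ) (hC : 0 < C) (hw : μ ≤ w)
    (hwC : w ≤ μ + C) (n : ℕ) :
    ∏ i ∈ Finset.range (n + 1), μ / (w + i * C) ≤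
      exp (-(μ * phi ((w + n * C - μ) / μ) / C)) := by
  set z := (w - μ) / μ
  set c := C / μ
  have hterm (i : ℕ) : μ / (w + i * C) = exp (-log (1 + (z + i * c))) := by
    have : 1 + (z + i * c) = (w + i * C) / μ := by simp only [z, c]; field_simp; ring
    have hpos : 0 < w + i * C := add_pos_of_pos_of_nonneg (by linarith) (by positivity)
    rw [exp_neg, this, exp_log (div_pos hpos hμ), inv_div]
  rw [Finset.prod_congr rfl fun i _ => hterm i, ← exp_sum, exp_le_exp, Finset.sum_neg_distrib,
    neg_le_neg_iff, div_le_iff₀ hC]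
  have harg : (w + n * C - μ) / μ = z + n * c := by simp only [z, c]; field_simp; ring
  have hsum := phi_le_mul_sum_log (div_nonneg (by linarith) hμ.le)
    (div_le_div_of_nonneg_right (by linarith) hμ.le : z ≤ c) n
  rw [harg]
  calc μ * phi (z + n * c) ≤ μ * (c * ∑ i ∈ Finset.range (n + 1), log (1 + (z + i * c))) :=
        mul_le_mul_of_nonneg_left hsum hμ.le
    _ = _ := by simp only [c]; field_simp

end Phi

section Percolation

variable {V : Type} [Fintype V]

instance (p : ℝ) : IsProbabilityMeasure (perc V p) := by
  unfold perc; infer_instance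

lemma bern_singleton_true {p : ℝ} (hp1 : p ≤ 1) : bern p {true} = ENNReal.ofReal p := by
  simp only [bern, min_eq_left (Real.toNNReal_le_one.2 hp1)]
  rw [PMF.toMeasure_apply_singleton _ _ (measurableSet_singleton _)]
  rfl

lemma perc_real_forall_true {p : ℝ} (hp0 : 0 ≤ p) (hp1 : p ≤ 1) (α : Finset V) :
    (perc V p).real {ω | ∀ v ∈ α, ω v = true} = p ^ α.card := by
  have hset : {ω : V → Bool | ∀ v ∈ α, ω v = true}
      = Set.univ.pi fun v => if v ∈ α then {true} else Set.univ := by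
    ext ω
    simp only [Set.mem_ofPred_eq, Set.mem_pi, Set.mem_univ, true_implies]
    refine forall_congr' fun v => ?_
    split_ifs <;> simp [*]
  have hfactor (v : V) : bern p (if v ∈ α then {true} else Set.univ) =
      if v ∈ α then ENNReal.ofReal p else 1 := by
    split_ifs
    exacts [bern_singleton_true hp1, measure_univ]
  rw [measureReal_def, hset, perc, Measure.pi_pi]
  simp_rw [hfactor]
  rw [Finset.prod_ite_mem, Finset.univ_inter, Finset.prod_const, ENNReal.toReal_pow,
    ENNReal.toReal_ofReal hp0]

lemma perc_real_forall_true_inter {p : ℝ} (hp0 : 0 ≤ p) (hp1 : p ≤ 1) (α : Finset V)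
    {B : Set (V → Bool)}
    (hB : ∀ ω ω', (∀ v ∉ α, ω v = ω' v) → ω ∈ B → ω' ∈ B) :
    (perc V p).real ({ω | ∀ v ∈ α, ω v = true} ∩ B) =
      p ^ α.card * (perc V p).real B := by
  set f := fun (ω : V → Bool) (i : α) => ω i
  set g := fun (ω : V → Bool) (i : ↥αᶜ) => ω i
  have hfg : ProbabilityTheory.IndepFun f g (perc V p) :=
    (ProbabilityTheory.iIndepFun_pi (X := fun _ => id) fun _ => aemeasurable_id).indepFun_finset
      α αᶜ disjoint_compl_right fun i => measurable_pi_apply i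
  have hA : {ω | ∀ v ∈ α, ω v = true} = f ⁻¹' {x | ∀ i, x i = true} := by
    ext ω; simp [f]
  have hB' : B = g ⁻¹' (g '' B) := by
    refine (Set.subset_preimage_image g B).antisymm ?_
    rintro ω ⟨ω', hω', hg⟩
    exact hB ω' ω (fun v hv => congrFun hg ⟨v, Finset.mem_compl.2 hv⟩) hω'
  rw [← perc_real_forall_true hp0 hp1 α, hA, hB', measureReal_def, measureReal_def,
    measureReal_def, hfg.measure_inter_preimage_eq_mul _ _ .of_discrete .of_discrete,
    ENNReal.toReal_mul]

lemma mu_eq_sum {p : ℝ} (hp0 : 0 ≤ p) (hp1 : p ≤ 1) (H : Finset (Finset V)) :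
    mu H p = ∑ α ∈ H, p ^ α.card := by
  have hXE : XE H = fun ω =>
      ∑ α ∈ H, {ω : V → Bool | ∀ v ∈ α, ω v = true}.indicator 1 ω := by
    ext ω
    rw [XE, HpEdges, Finset.card_filter]
    push_cast
    simp [Set.indicator_apply]
  rw [mu, hXE, integral_finsetSum _ fun _ _ => .of_finite]
  simp_rw [integral_indicator_one MeasurableSet.of_discrete, perc_real_forall_true hp0 hp1]

lemma mu_nonneg {p : ℝ} (hp0 : 0 ≤ p) (hp1 : p ≤ 1) (H : Finset (Finset V)) :
    0 ≤ mu H p := by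
  rw [mu_eq_sum hp0 hp1]
  positivity

lemma mu_mono {p : ℝ} (hp0 : 0 ≤ p) (hp1 : p ≤ 1) {H H' : Finset (Finset V)} (h : H' ⊆ H) :
    mu H' p ≤ mu H p := by
  rw [mu_eq_sum hp0 hp1, mu_eq_sum hp0 hp1]
  exact Finset.sum_le_sum_of_subset_of_nonneg h fun _ _ _ => by positivity

end Percolation

lemma mul_measureReal_le_sum {Ω ι : Type*} [MeasurableSpace Ω] (μ : Measure Ω)
    [IsFiniteMeasure μ] {E : Set Ω} (hE : MeasurableSet E) (I : Finset ι) {F : ι → Set Ω}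
    (hF : ∀ i ∈ I, MeasurableSet (F i)) {s : ℝ}
    (h : ∀ ω ∈ E, ∃ J ⊆ I, s ≤ J.card ∧ ∀ i ∈ J, ω ∈ F i) :
    s * μ.real E ≤ ∑ i ∈ I, μ.real (F i) := by
  have hint : ∀ i ∈ I, Integrable ((F i).indicator (1 : Ω → ℝ)) μ :=
    fun i hi => (integrable_const 1).indicator (hF i hi)
  have hnonneg (i : ι) : 0 ≤ (F i).indicator (1 : Ω → ℝ) :=
    Set.indicator_nonneg fun _ _ => zero_le_one
  have hpoint (ω : Ω) : E.indicator (fun _ => s) ω ≤ ∑ i ∈ I, (F i).indicator 1 ω := by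
    by_cases hω : ω ∈ E
    · obtain ⟨J, hJI, hsJ, hJF⟩ := h ω hω
      calc E.indicator (fun _ => s) ω ≤ ∑ i ∈ J, (1 : ℝ) := by simpa [hω] using hsJ
        _ = ∑ i ∈ J, (F i).indicator 1 ω :=
            Finset.sum_congr rfl fun i hi => (Set.indicator_of_mem (hJF i hi) (1 : Ω → ℝ)).symm
        _ ≤ ∑ i ∈ I, (F i).indicator 1 ω :=
            Finset.sum_le_sum_of_subset_of_nonneg hJI fun i _ _ => hnonneg i ω
    · simpa [hω] using Finset.sum_nonneg fun i _ => hnonneg i ω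
  calc s * μ.real E = ∫ ω, E.indicator (fun _ => s) ω ∂μ := by
        rw [integral_indicator_const _ hE, smul_eq_mul, mul_comm]
    _ ≤ ∫ ω, ∑ i ∈ I, (F i).indicator 1 ω ∂μ :=
        integral_mono ((integrable_const s).indicator hE) (integrable_finsetSum _ hint) hpoint
    _ = ∑ i ∈ I, μ.real (F i) := by
        rw [integral_finsetSum _ hint]
        exact Finset.sum_congr rfl fun i hi => integral_indicator_one (hF i hi)

section BoundedDegreeSubgraph

variable {V : Type} {H : Finset (Finset V)} {r : ℝ} {ω : V → Bool}

lemma Xr_set_finite (H : Finset (Finset V)) (r : ℝ) (ω : V → Bool) :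
    {z : ℝ | ∃ G : Finset (Finset V), G ⊆ HpEdges H ω ∧
      (∀ v : V, (deg G v : ℝ) ≤ r) ∧ z = (G.card : ℝ)}.Finite :=
  ((HpEdges H ω).powerset.finite_toSet.image fun G => (G.card : ℝ)).subset <| by
    rintro _ ⟨G, hG, -, rfl⟩
    exact ⟨G, Finset.mem_powerset.2 hG, rfl⟩

lemma card_le_Xr {G : Finset (Finset V)} (hG : G ⊆ HpEdges H ω)
    (hdeg : ∀ v, (deg G v : ℝ) ≤ r) : (G.card : ℝ) ≤ Xr H r ω :=
  le_csSup (Xr_set_finite H r ω).bddAbove ⟨G, hG, hdeg, rfl⟩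

lemma exists_card_eq_Xr (hr : 0 ≤ r) (ω : V → Bool) :
    ∃ G ⊆ HpEdges H ω, (∀ v, (deg G v : ℝ) ≤ r) ∧ (G.card : ℝ) = Xr H r ω := by
  have hne : {z : ℝ | ∃ G : Finset (Finset V), G ⊆ HpEdges H ω ∧
      (∀ v : V, (deg G v : ℝ) ≤ r) ∧ z = (G.card : ℝ)}.Nonempty :=
    ⟨0, ∅, Finset.empty_subset _, fun v => by simpa [deg] using hr, by simp⟩
  obtain ⟨G, hG, hdeg, hcard⟩ := hne.csSup_mem (Xr_set_finite H r ω)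
  exact ⟨G, hG, hdeg, hcard.symm⟩

lemma Xr_congr {ω' : V → Bool} (h : ∀ e ∈ H, ∀ v ∈ e, ω v = ω' v) :
    Xr H r ω = Xr H r ω' := by
  have hedges : HpEdges H ω = HpEdges H ω' :=
    Finset.filter_congr fun e he => forall₂_congr fun v hv => by rw [h e he v hv]
  simp only [Xr, hedges]

lemma card_sub_le_card_filter_disjoint {G : Finset (Finset V)} (hdeg : ∀ v, (deg G v : ℝ) ≤ r)
    (α : Finset V) : (G.card : ℝ) - α.card * r ≤ (G.filter (Disjoint α)).card := by
  have hmeet : G.filter (¬ Disjoint α ·) ⊆ α.biUnion fun v => G.filter (v ∈ ·) := by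
    intro e he
    obtain ⟨he, hne⟩ := Finset.mem_filter.1 he
    obtain ⟨v, hvα, hve⟩ := Finset.not_disjoint_iff.1 hne
    exact Finset.mem_biUnion.2 ⟨v, hvα, Finset.mem_filter.2 ⟨he, hve⟩⟩
  have hcard : ((G.filter (¬ Disjoint α ·)).card : ℝ) ≤ α.card * r := calc
    _ ≤ ((∑ v ∈ α, deg G v : ℕ) : ℝ) := by
        exact_mod_cast (Finset.card_le_card hmeet).trans Finset.card_biUnion_le
    _ ≤ ∑ _ ∈ α, r := by push_cast; exact Finset.sum_le_sum fun v _ => hdeg v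
    _ = α.card * r := by simp
  have hsplit :
      ((G.filter (Disjoint α)).card : ℝ) + (G.filter (¬ Disjoint α ·)).card = G.card := by
    exact_mod_cast Finset.card_filter_add_card_filter_not _
  linarith

lemma exists_subset_forall_le_Xr_filter_disjoint {k : ℕ} (hH : ∀ e ∈ H, e.card ≤ k)
    (hr : 0 ≤ r) {s : ℝ} (hs : s ≤ Xr H r ω) :
    ∃ G ⊆ H, s ≤ G.card ∧ ∀ α ∈ G, (∀ v ∈ α, ω v = true) ∧
      s - k * r ≤ Xr (H.filter (Disjoint α)) r ω := by
  obtain ⟨G, hG, hdeg, hGX⟩ := exists_card_eq_Xr hr ω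
  refine ⟨G, hG.trans (Finset.filter_subset _ _), hGX ▸ hs, fun α hα => ?_⟩
  obtain ⟨hαH, hαlive⟩ := Finset.mem_filter.1 (hG hα)
  refine ⟨hαlive, ?_⟩
  have hsub : G.filter (Disjoint α) ⊆ HpEdges (H.filter (Disjoint α)) ω := by
    intro e he
    obtain ⟨heG, hdisj⟩ := Finset.mem_filter.1 he
    obtain ⟨heH, helive⟩ := Finset.mem_filter.1 (hG heG)
    exact Finset.mem_filter.2 ⟨Finset.mem_filter.2 ⟨heH, hdisj⟩, helive⟩
  have hdeg' (v : V) : (deg (G.filter (Disjoint α)) v : ℝ) ≤ r := by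
    refine le_trans ?_ (hdeg v)
    exact_mod_cast Finset.card_le_card (Finset.filter_subset_filter _ (Finset.filter_subset _ _))
  have hαk : (α.card : ℝ) ≤ k := by exact_mod_cast hH α hαH
  calc s - k * r ≤ G.card - α.card * r := by rw [hGX]; nlinarith
    _ ≤ (G.filter (Disjoint α)).card := card_sub_le_card_filter_disjoint hdeg α
    _ ≤ _ := card_le_Xr hsub hdeg'

end BoundedDegreeSubgraph

section UpperTail

variable {V : Type} [Fintype V] {p : ℝ} {H : Finset (Finset V)} {k : ℕ} {r : ℝ}

lemma mul_tail_Xr_le_sum (hp0 : 0 ≤ p) (hp1 : p ≤ 1) (hH : ∀ e ∈ H, e.card ≤ k)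
    (hr : 0 ≤ r) (s : ℝ) :
    s * (perc V p).real {ω | s ≤ Xr H r ω} ≤
      ∑ α ∈ H, p ^ α.card *
        (perc V p).real {ω | s - k * r ≤ Xr (H.filter (Disjoint α)) r ω} := by
  calc _ ≤ ∑ α ∈ H, (perc V p).real ({ω | ∀ v ∈ α, ω v = true} ∩
        {ω | s - k * r ≤ Xr (H.filter (Disjoint α)) r ω}) :=
        mul_measureReal_le_sum _ .of_discrete H (fun _ _ => .of_discrete) fun _ hω =>
          exists_subset_forall_le_Xr_filter_disjoint hH hr hω
    _ = _ := by
      refine Finset.sum_congr rfl fun α _ => perc_real_forall_true_inter hp0 hp1 α ?_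
      intro ω ω' hagree hω
      rwa [Set.mem_ofPred_eq, ← Xr_congr fun e he v hv => hagree v fun hvα =>
        Finset.disjoint_left.1 (Finset.mem_filter.1 he).2 hvα hv]

lemma tail_Xr_le_div_mul (hp0 : 0 ≤ p) (hp1 : p ≤ 1) (hH : ∀ e ∈ H, e.card ≤ k)
    (hr : 0 ≤ r) {s Q : ℝ} (hs : 0 < s)
    (hQ : ∀ α ∈ H,
      (perc V p).real {ω | s - k * r ≤ Xr (H.filter (Disjoint α)) r ω} ≤ Q) :
    (perc V p).real {ω | s ≤ Xr H r ω} ≤ mu H p / s * Q := by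
  rw [div_mul_eq_mul_div, le_div_iff₀' hs, mu_eq_sum hp0 hp1, Finset.sum_mul]
  exact (mul_tail_Xr_le_sum hp0 hp1 hH hr s).trans
    (Finset.sum_le_sum fun α hα => mul_le_mul_of_nonneg_left (hQ α hα) (by positivity))

lemma tail_Xr_le_prod (hp0 : 0 ≤ p) (hp1 : p ≤ 1) (hr : 0 ≤ r) {w : ℝ} (hw : 0 < w)
    (n : ℕ) :
    ∀ H : Finset (Finset V), (∀ e ∈ H, e.card ≤ k) →
      (perc V p).real {ω | w + n * (k * r) ≤ Xr H r ω} ≤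
        ∏ i ∈ Finset.range (n + 1), mu H p / (w + i * (k * r)) := by
  have hpos (m : ℕ) : 0 < w + m * (k * r) := by positivity
  induction n with
  | zero =>
    intro H hH
    simpa using tail_Xr_le_div_mul hp0 hp1 hH hr hw fun α _ => measureReal_le_one
  | succ n ih =>
    intro H hH
    rw [Finset.prod_range_succ, mul_comm (∏ _ ∈ _, _)]
    refine tail_Xr_le_div_mul hp0 hp1 hH hr (hpos _) fun α _ => ?_
    have hshift : w + ((n + 1 : ℕ) : ℝ) * (k * r) - k * r = w + n * (k * r) := by
      push_cast; ring
    rw [hshift]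
    refine (ih _ fun e he => hH e (Finset.mem_filter.1 he).1).trans <|
      Finset.prod_le_prod (fun i _ => div_nonneg (mu_nonneg hp0 hp1 _) (hpos _).le)
        fun i _ => div_le_div_of_nonneg_right (mu_mono hp0 hp1 (Finset.filter_subset _ _))
          (hpos _).le

end UpperTail

lemma tail_Xr_le_exp_neg_phi {V : Type} [Fintype V] {p : ℝ} (hp0 : 0 ≤ p) (hp1 : p ≤ 1)
    {H : Finset (Finset V)} {k : ℕ} (hH : ∀ e ∈ H, e.card ≤ k) (hk : 0 < k) {r t : ℝ}
    (hr : 0 < r) (ht : 0 < t) (hμ : 0 < mu H p) :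
    (perc V p).real {ω | mu H p + t / 2 ≤ Xr H r ω} ≤
      exp (-(phi (t / mu H p) * mu H p / (4 * k * r))) := by
  set μ := mu H p
  set C : ℝ := k * r with hCdef
  have hC : 0 < C := by positivity
  -- `n` deletion steps of size `C` bring the level `μ + t/2` down to `w ∈ [μ, μ + C]`
  set n := ⌊t / 2 / C⌋₊
  have hnC : n * C ≤ t / 2 := (le_div_iff₀ hC).1 (Nat.floor_le (by positivity))
  have hCn : t / 2 < (n + 1) * C := (div_lt_iff₀ hC).1 (Nat.lt_floor_add_one _)
  set w := μ + t / 2 - n * C with hwdef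
  calc (perc V p).real {ω | μ + t / 2 ≤ Xr H r ω}
      = (perc V p).real {ω | w + n * C ≤ Xr H r ω} := by simp only [w, sub_add_cancel]
    _ ≤ ∏ i ∈ Finset.range (n + 1), μ / (w + i * C) :=
        tail_Xr_le_prod hp0 hp1 hr.le (by linarith) n H hH
    _ ≤ exp (-(μ * phi ((w + n * C - μ) / μ) / C)) :=
        prod_div_le_exp_neg_phi hμ hC (by linarith) (by linarith) n
    _ ≤ exp (-(phi (t / μ) * μ / (4 * k * r))) := by
        have harg : (w + n * C - μ) / μ = t / μ / 2 := by simp only [w]; field_simp; ring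
        have h4 := phi_le_four_mul_phi_half (div_nonneg ht.le hμ.le)
        rw [harg, exp_le_exp, neg_le_neg_iff, mul_assoc, ← hCdef,
          div_le_div_iff₀ (by positivity) hC]
        nlinarith [mul_le_mul_of_nonneg_right h4 (by positivity : 0 ≤ μ * C)]

/-- Lemma 3.1: upper tail estimate for `X_r`. -/
theorem statement9 (k : ℕ) (V : Type) [Fintype V] (H : Finset (Finset V))
    (hH : ∀ e ∈ H, e.card ≤ k) (p : ℝ) (hp0 : 0 ≤ p) (hp1 : p ≤ 1)
    (r t : ℝ) (hr : 0 < r) (ht : 0 < t) :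
    (perc V p {ω | mu H p + t/2 ≤ Xr H r ω}).toReal ≤
      Real.exp (-(phi (t / mu H p) * mu H p / (4 * (k:ℝ) * r))) ∧
    Real.exp (-(phi (t / mu H p) * mu H p / (4 * (k:ℝ) * r))) ≤
      Real.exp (-(min t (t ^ 2 / mu H p) / (12 * (k:ℝ) * r))) := by
  have hprob : (perc V p {ω | mu H p + t/2 ≤ Xr H r ω}).toReal ≤ 1 := measureReal_le_one
  have hμ0 := mu_nonneg hp0 hp1 H
  refine ⟨?_, ?_⟩
  · rcases Nat.eq_zero_or_pos k with rfl | hk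
    · simpa using hprob
    rcases hμ0.eq_or_lt with hμ | hμ
    · simpa [← hμ] using hprob
    exact tail_Xr_le_exp_neg_phi hp0 hp1 hH hk hr ht hμ
  · rw [exp_le_exp, neg_le_neg_iff]
    calc min t (t ^ 2 / mu H p) / (12 * k * r)
        ≤ 3 * (phi (t / mu H p) * mu H p) / (12 * k * r) :=
          div_le_div_of_nonneg_right (min_le_three_mul_phi_div_mul hμ0 ht.le) (by positivity)
      _ = _ := by ring

end UT
end
end

section
/- For any hypergraph H, all p ∈ [0,1] and all y, r > 0: Pr(M_r(H_p) ≥ y) ≤ Φ_r^{⌈y⌉} / ⌈y⌉! ≤ (1/√(2π⌈y⌉))·(e·Φ_r/⌈y⌉)^{⌈y⌉}, where Φ_r = Σ_{v ∈ V(H)} Pr(|Γ_v(H_p)| ≥ ⌈r⌉). -/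
/-!
If `M_r(H_p) ≥ k`, the centres of `k` disjoint `r`-stars are `k` distinct vertices whose events
`|Γ_v(H_p)| ≥ ⌈r⌉` occur disjointly, each witnessed by the vertex set of its star. By the
van den Berg–Kesten inequality for up-sets (proved by conditioning on one vertex at a time) this
has probability at most the product of the individual probabilities. A union bound over the
`k`-sets of centres, together with the fact that each `k`-set contributes `k!` terms to the
multinomial expansion of `Φ_r^k`, gives `Φ_r^k / k!`; the second inequality is Stirling's bound
`k! ≥ √(2πk) (k/e)^k`.
-/

open MeasureTheory Real
open scoped ENNReal Classical

noncomputable section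

namespace UT

open Finset
open scoped Nat

section BernoulliCube

variable {α : Type*} {p : ℝ}

/-- The probability that the `p`-random subset of `s` equals `U` (meaningful only for `U ⊆ s`). -/
def bernoulliWeight (p : ℝ) (s U : Finset α) : ℝ := p ^ #U * (1 - p) ^ #(s \ U)

def bernoulliProb (p : ℝ) (s : Finset α) (𝒜 : Set (Finset α)) : ℝ :=
  ∑ U ∈ s.powerset, 𝒜.indicator (bernoulliWeight p s) U

lemma bernoulliWeight_nonneg (hp0 : 0 ≤ p) (hp1 : p ≤ 1) (s U : Finset α) :
    0 ≤ bernoulliWeight p s U := by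
  have : 0 ≤ 1 - p := sub_nonneg.mpr hp1
  unfold bernoulliWeight
  positivity

lemma bernoulliWeight_insert_of_subset {a : α} {s U : Finset α} (ha : a ∉ s) (hU : U ⊆ s) :
    bernoulliWeight p (insert a s) U = (1 - p) * bernoulliWeight p s U := by
  have haU : a ∉ s \ U := fun h => ha (mem_sdiff.1 h).1
  rw [bernoulliWeight, bernoulliWeight, insert_sdiff_of_notMem _ (fun h => ha (hU h)),
    card_insert_of_notMem haU, pow_succ]
  ring

lemma bernoulliWeight_insert_insert {a : α} {s U : Finset α} (ha : a ∉ s) (hU : U ⊆ s) :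
    bernoulliWeight p (insert a s) (insert a U) = p * bernoulliWeight p s U := by
  rw [bernoulliWeight, bernoulliWeight, insert_sdiff_insert, sdiff_insert_of_notMem ha,
    card_insert_of_notMem (fun h => ha (hU h)), pow_succ]
  ring

lemma bernoulliProb_nonneg (hp0 : 0 ≤ p) (hp1 : p ≤ 1) (s : Finset α) (𝒜 : Set (Finset α)) :
    0 ≤ bernoulliProb p s 𝒜 :=
  sum_nonneg fun U _ => Set.indicator_nonneg (fun U _ => bernoulliWeight_nonneg hp0 hp1 s U) U

lemma bernoulliProb_mono (hp0 : 0 ≤ p) (hp1 : p ≤ 1) (s : Finset α) {𝒜 ℬ : Set (Finset α)}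
    (h : 𝒜 ⊆ ℬ) : bernoulliProb p s 𝒜 ≤ bernoulliProb p s ℬ :=
  sum_le_sum fun U _ =>
    Set.indicator_le_indicator_of_subset h (bernoulliWeight_nonneg hp0 hp1 s) U

lemma bernoulliProb_union_add_inter (s : Finset α) (𝒜 ℬ : Set (Finset α)) :
    bernoulliProb p s (𝒜 ∪ ℬ) + bernoulliProb p s (𝒜 ∩ ℬ) =
      bernoulliProb p s 𝒜 + bernoulliProb p s ℬ := by
  simp only [bernoulliProb, ← sum_add_distrib]
  exact sum_congr rfl fun U _ => congrFun (Set.indicator_union_add_inter _ 𝒜 ℬ) U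

lemma bernoulliProb_biUnion_le (hp0 : 0 ≤ p) (hp1 : p ≤ 1) (s : Finset α) {ι : Type*}
    (t : Finset ι) (𝒜 : ι → Set (Finset α)) :
    bernoulliProb p s (⋃ i ∈ t, 𝒜 i) ≤ ∑ i ∈ t, bernoulliProb p s (𝒜 i) := by
  induction t using Finset.induction_on with
  | empty => simp [bernoulliProb]
  | insert i t hi ih =>
    rw [set_biUnion_insert, sum_insert hi]
    have := bernoulliProb_union_add_inter (p := p) s (𝒜 i) (⋃ j ∈ t, 𝒜 j)
    have := bernoulliProb_nonneg hp0 hp1 s (𝒜 i ∩ ⋃ j ∈ t, 𝒜 j)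
    linarith

lemma bernoulliProb_univ (s : Finset α) : bernoulliProb p s Set.univ = 1 := by
  rw [← one_pow #s, ← add_sub_cancel p 1, ← sum_pow_mul_eq_add_pow]
  refine sum_congr rfl fun U hU => ?_
  rw [Set.indicator_univ, bernoulliWeight, card_sdiff_of_subset (mem_powerset.1 hU)]

lemma bernoulliProb_empty (𝒜 : Set (Finset α)) :
    bernoulliProb p ∅ 𝒜 = if ∅ ∈ 𝒜 then 1 else 0 := by
  simp [bernoulliProb, bernoulliWeight, Set.indicator_apply]

lemma bernoulliProb_insert {a : α} {s : Finset α} (ha : a ∉ s) (𝒜 : Set (Finset α)) :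
    bernoulliProb p (insert a s) 𝒜 =
      (1 - p) * bernoulliProb p s 𝒜 + p * bernoulliProb p s {U | insert a U ∈ 𝒜} := by
  rw [bernoulliProb, sum_powerset_insert ha, bernoulliProb, bernoulliProb, mul_sum, mul_sum]
  congr 1 <;> refine sum_congr rfl fun U hU => ?_ <;>
    simp only [Set.indicator_apply, Set.mem_ofPred_eq, mul_ite, mul_zero]
  · rw [bernoulliWeight_insert_of_subset ha (mem_powerset.1 hU)]
  · rw [bernoulliWeight_insert_insert ha (mem_powerset.1 hU)]

end BernoulliCube

section DisjointOccurrence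

variable {α ι : Type*} {p : ℝ}

/-- The disjoint occurrence `𝒜 □ ℬ`; it is the standard notion when `𝒜` and `ℬ` are up-sets. -/
def disjOcc (𝒜 ℬ : Set (Finset α)) : Set (Finset α) :=
  {U | ∃ S ∈ 𝒜, ∃ T ∈ ℬ, Disjoint S T ∧ S ⊆ U ∧ T ⊆ U}

lemma disjOcc_mono {𝒜 𝒜' ℬ ℬ' : Set (Finset α)} (h𝒜 : 𝒜 ⊆ 𝒜') (hℬ : ℬ ⊆ ℬ') :
    disjOcc 𝒜 ℬ ⊆ disjOcc 𝒜' ℬ' := by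
  rintro U ⟨S, hS, T, hT, hST, hSU, hTU⟩
  exact ⟨S, h𝒜 hS, T, hℬ hT, hST, hSU, hTU⟩

lemma empty_mem_disjOcc_iff {𝒜 ℬ : Set (Finset α)} : ∅ ∈ disjOcc 𝒜 ℬ ↔ ∅ ∈ 𝒜 ∧ ∅ ∈ ℬ := by
  constructor
  · rintro ⟨S, hS, T, hT, -, hSU, hTU⟩
    rw [subset_empty] at hSU hTU
    exact ⟨hSU ▸ hS, hTU ▸ hT⟩
  · rintro ⟨h𝒜, hℬ⟩
    exact ⟨∅, h𝒜, ∅, hℬ, disjoint_empty_left _, subset_rfl, subset_rfl⟩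

/-- The point `a` lies in at most one of the two witnesses. -/
lemma insert_preimage_disjOcc_subset {a : α} {𝒜 ℬ : Set (Finset α)} (hℬ : IsUpperSet ℬ) :
    {U | insert a U ∈ disjOcc 𝒜 ℬ} ⊆
      disjOcc {U | insert a U ∈ 𝒜} ℬ ∪ disjOcc 𝒜 {U | insert a U ∈ ℬ} := by
  rintro U ⟨S, hS, T, hT, hST, hSU, hTU⟩
  rw [subset_insert_iff] at hSU hTU
  by_cases haS : a ∈ S
  · have haT : a ∉ T := disjoint_left.1 hST haS
    refine Or.inl ⟨S.erase a, by simpa [insert_erase haS] using hS, T, hT,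
      disjoint_of_subset_left (erase_subset a S) hST, hSU, ?_⟩
    rwa [erase_eq_of_notMem haT] at hTU
  · refine Or.inr ⟨S, hS, T.erase a, hℬ (insert_erase_subset a T) hT, ?_, ?_, hTU⟩
    · exact disjoint_of_subset_right (erase_subset a T) hST
    · rwa [erase_eq_of_notMem haS] at hSU

/-- The van den Berg–Kesten inequality for up-sets. -/
theorem bernoulliProb_disjOcc_le_mul (hp0 : 0 ≤ p) (hp1 : p ≤ 1) (s : Finset α)
    {𝒜 ℬ : Set (Finset α)} (h𝒜 : IsUpperSet 𝒜) (hℬ : IsUpperSet ℬ) :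
    bernoulliProb p s (disjOcc 𝒜 ℬ) ≤ bernoulliProb p s 𝒜 * bernoulliProb p s ℬ := by
  induction s using Finset.induction_on generalizing 𝒜 ℬ with
  | empty =>
    simp only [bernoulliProb_empty, empty_mem_disjOcc_iff]
    split_ifs <;> simp_all
  | insert a s ha ih =>
    set μ := bernoulliProb p s
    set 𝒜' := {U | insert a U ∈ 𝒜}
    set ℬ' := {U | insert a U ∈ ℬ}
    have h𝒜' : IsUpperSet 𝒜' := fun U U' hUU' hU => h𝒜 (insert_subset_insert a hUU') hU
    have hℬ' : IsUpperSet ℬ' := fun U U' hUU' hU => hℬ (insert_subset_insert a hUU') hU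
    have h𝒜𝒜' : 𝒜 ⊆ 𝒜' := fun U hU => h𝒜 (subset_insert a U) hU
    have hℬℬ' : ℬ ⊆ ℬ' := fun U hU => hℬ (subset_insert a U) hU
    set X := disjOcc 𝒜' ℬ
    set Y := disjOcc 𝒜 ℬ'
    have hslice : μ {U | insert a U ∈ disjOcc 𝒜 ℬ} ≤ μ (X ∪ Y) :=
      bernoulliProb_mono hp0 hp1 s (insert_preimage_disjOcc_subset hℬ)
    have hinter : μ (disjOcc 𝒜 ℬ) ≤ μ (X ∩ Y) := bernoulliProb_mono hp0 hp1 s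
      (Set.subset_inter (disjOcc_mono h𝒜𝒜' le_rfl) (disjOcc_mono le_rfl hℬℬ'))
    have hunion : μ (X ∪ Y) ≤ μ (disjOcc 𝒜' ℬ') := bernoulliProb_mono hp0 hp1 s
      (Set.union_subset (disjOcc_mono le_rfl hℬℬ') (disjOcc_mono h𝒜𝒜' le_rfl))
    have hXY : μ (X ∪ Y) ≤ μ X + μ Y - μ (disjOcc 𝒜 ℬ) := by
      linarith [bernoulliProb_union_add_inter (p := p) s X Y]
    have hZ := ih h𝒜 hℬ
    have hX : μ X ≤ μ 𝒜' * μ ℬ := ih h𝒜' hℬ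
    have hY : μ Y ≤ μ 𝒜 * μ ℬ' := ih h𝒜 hℬ'
    have hW := ih h𝒜' hℬ'
    have hq : 0 ≤ 1 - p := sub_nonneg.mpr hp1
    rw [bernoulliProb_insert ha, bernoulliProb_insert ha, bernoulliProb_insert ha]
    -- Split `p • μ (X ∪ Y)` as `p(1 - p) • μ (X ∪ Y) + p² • μ (X ∪ Y)`; bound the first part by
    -- inclusion–exclusion and the second by `X ∪ Y ⊆ 𝒜' □ ℬ'`.
    calc (1 - p) * μ (disjOcc 𝒜 ℬ) + p * μ {U | insert a U ∈ disjOcc 𝒜 ℬ}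
        ≤ (1 - p) * μ (disjOcc 𝒜 ℬ) +
            p * ((1 - p) * (μ X + μ Y - μ (disjOcc 𝒜 ℬ)) + p * μ (disjOcc 𝒜' ℬ')) := by
          gcongr
          calc μ {U | insert a U ∈ disjOcc 𝒜 ℬ} ≤ (1 - p) * μ (X ∪ Y) + p * μ (X ∪ Y) := by
                linarith
            _ ≤ _ := by gcongr
      _ = (1 - p) ^ 2 * μ (disjOcc 𝒜 ℬ) + p * (1 - p) * (μ X + μ Y) +
            p ^ 2 * μ (disjOcc 𝒜' ℬ') := by ring
      _ ≤ (1 - p) ^ 2 * (μ 𝒜 * μ ℬ) + p * (1 - p) * (μ 𝒜' * μ ℬ + μ 𝒜 * μ ℬ') +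
            p ^ 2 * (μ 𝒜' * μ ℬ') := by gcongr
      _ = ((1 - p) * μ 𝒜 + p * μ 𝒜') * ((1 - p) * μ ℬ + p * μ ℬ') := by ring

def iDisjOcc (t : Finset ι) (𝒜 : ι → Set (Finset α)) : Set (Finset α) :=
  {U | ∃ W : ι → Finset α, (t : Set ι).PairwiseDisjoint W ∧ ∀ i ∈ t, W i ∈ 𝒜 i ∧ W i ⊆ U}

lemma isUpperSet_iDisjOcc (t : Finset ι) (𝒜 : ι → Set (Finset α)) :
    IsUpperSet (iDisjOcc t 𝒜) := by
  rintro U U' hUU' ⟨W, hW, hWU⟩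
  exact ⟨W, hW, fun i hi => ⟨(hWU i hi).1, (hWU i hi).2.trans hUU'⟩⟩

lemma iDisjOcc_insert_subset {i : ι} {t : Finset ι} (hi : i ∉ t) (𝒜 : ι → Set (Finset α)) :
    iDisjOcc (insert i t) 𝒜 ⊆ disjOcc (𝒜 i) (iDisjOcc t 𝒜) := by
  rintro U ⟨W, hW, hWU⟩
  have hWt : ∀ j ∈ t, W j ∈ 𝒜 j ∧ W j ⊆ U := fun j hj => hWU j (mem_insert_of_mem hj)
  refine ⟨W i, (hWU i (mem_insert_self i t)).1, t.biUnion W, ?_, ?_,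
    (hWU i (mem_insert_self i t)).2, biUnion_subset.2 fun j hj => (hWt j hj).2⟩
  · exact ⟨W, hW.subset (by simp), fun j hj => ⟨(hWt j hj).1, subset_biUnion_of_mem W hj⟩⟩
  · refine (disjoint_biUnion_right _ _ _).2 fun j hj => hW (by simp) (by simp [hj]) ?_
    rintro rfl
    exact hi hj

theorem bernoulliProb_iDisjOcc_le_prod (hp0 : 0 ≤ p) (hp1 : p ≤ 1) (s : Finset α)
    {t : Finset ι} {𝒜 : ι → Set (Finset α)} (h𝒜 : ∀ i ∈ t, IsUpperSet (𝒜 i)) :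
    bernoulliProb p s (iDisjOcc t 𝒜) ≤ ∏ i ∈ t, bernoulliProb p s (𝒜 i) := by
  induction t using Finset.induction_on with
  | empty =>
    rw [prod_empty, ← bernoulliProb_univ (p := p) s]
    exact bernoulliProb_mono hp0 hp1 s (Set.subset_univ _)
  | insert i t hi ih =>
    rw [prod_insert hi]
    calc bernoulliProb p s (iDisjOcc (insert i t) 𝒜)
        ≤ bernoulliProb p s (disjOcc (𝒜 i) (iDisjOcc t 𝒜)) :=
          bernoulliProb_mono hp0 hp1 s (iDisjOcc_insert_subset hi 𝒜)
      _ ≤ bernoulliProb p s (𝒜 i) * bernoulliProb p s (iDisjOcc t 𝒜) :=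
          bernoulliProb_disjOcc_le_mul hp0 hp1 s (h𝒜 i (mem_insert_self i t))
            (isUpperSet_iDisjOcc t 𝒜)
      _ ≤ bernoulliProb p s (𝒜 i) * ∏ j ∈ t, bernoulliProb p s (𝒜 j) := by
          gcongr
          · exact bernoulliProb_nonneg hp0 hp1 s _
          · exact ih fun j hj => h𝒜 j (mem_insert_of_mem hj)

lemma iDisjOcc_comp_subset_image {κ : Type*} {t : Finset ι} {f : ι → κ} (hf : Set.InjOn f t)
    (𝒜 : κ → Set (Finset α)) : iDisjOcc t (𝒜 ∘ f) ⊆ iDisjOcc (t.image f) 𝒜 := by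
  rintro U ⟨W, hW, hWU⟩
  have hfiber : ∀ i ∈ t, ({j ∈ t | f j = f i}.biUnion W) = W i := fun i hi => by
    rw [show {j ∈ t | f j = f i} = {i} by
      ext j; simp only [mem_filter, mem_singleton]
      exact ⟨fun hj => hf hj.1 hi hj.2, by rintro rfl; exact ⟨hi, rfl⟩⟩,
      singleton_biUnion]
  refine ⟨fun k => {j ∈ t | f j = k}.biUnion W, ?_, ?_⟩
  · rw [coe_image, hf.pairwiseDisjoint_image]
    intro i hi j hj hij
    simpa [Function.onFun, hfiber i hi, hfiber j hj] using hW hi hj hij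
  · simp only [mem_image, forall_exists_index, and_imp, forall_apply_eq_imp_iff₂]
    intro i hi
    simpa [hfiber i hi] using hWU i hi

end DisjointOccurrence

section Stars

variable {V : Type} [Fintype V]

lemma mem_HpEdges_decide {H : Finset (Finset V)} {U f : Finset V} :
    f ∈ HpEdges H (fun x => decide (x ∈ U)) ↔ f ∈ H ∧ f ⊆ U := by
  simp [HpEdges, subset_iff]

def degreeEvent (H : Finset (Finset V)) (r : ℝ) (v : V) : Set (Finset V) :=
  {U | ⌈r⌉₊ ≤ deg (HpEdges H fun x => decide (x ∈ U)) v}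

lemma isUpperSet_degreeEvent (H : Finset (Finset V)) (r : ℝ) (v : V) :
    IsUpperSet (degreeEvent H r v) := by
  intro U U' hUU' hU
  refine hU.trans (card_le_card (filter_subset_filter _ fun f hf => ?_))
  rw [mem_HpEdges_decide] at hf ⊢
  exact ⟨hf.1, hf.2.trans hUU'⟩

lemma exists_starMatching_card_eq {G : Finset (Finset V)} {r : ℝ} {k : ℕ} (hk : k ≤ Mr G r) :
    ∃ M : Finset (V × Finset (Finset V)),
      (∀ S ∈ M, S.2 ⊆ G.filter (fun f => S.1 ∈ f) ∧ S.2.card = ⌈r⌉₊) ∧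
      (∀ S ∈ M, ∀ T ∈ M, S ≠ T → Disjoint (starVtx S.2) (starVtx T.2)) ∧ #M = k := by
  obtain ⟨M, hstar, hdisj, hM⟩ := Nat.sSup_mem (s := {m : ℕ | ∃ M : Finset (V × Finset (Finset V)),
      (∀ S ∈ M, S.2 ⊆ G.filter (fun f => S.1 ∈ f) ∧ S.2.card = ⌈r⌉₊) ∧
      (∀ S ∈ M, ∀ T ∈ M, S ≠ T → Disjoint (starVtx S.2) (starVtx T.2)) ∧ m = #M})
    ⟨0, ∅, by simp, by simp, rfl⟩ ⟨Fintype.card _, by rintro m ⟨M, -, -, rfl⟩; exact card_le_univ M⟩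
  obtain ⟨M', hM'M, hM'⟩ := exists_subset_card_eq (hk.trans_eq hM)
  exact ⟨M', fun S hS => hstar S (hM'M hS),
    fun S hS T hT => hdisj S (hM'M hS) T (hM'M hT), hM'⟩

/-- The centres of disjoint `r`-stars are distinct, and the vertex set of each star witnesses
the degree event of its centre. -/
lemma exists_mem_iDisjOcc_degreeEvent {H : Finset (Finset V)} {r : ℝ} (hr : 0 < r) {U : Finset V}
    {k : ℕ} (hk : k ≤ Mr (HpEdges H fun x => decide (x ∈ U)) r) :
    ∃ t ∈ powersetCard k univ, U ∈ iDisjOcc t (degreeEvent H r) := by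
  obtain ⟨M, hstar, hdisj, rfl⟩ := exists_starMatching_card_eq hk
  have hcentre : ∀ S ∈ M, S.1 ∈ starVtx S.2 := fun S hS => by
    obtain ⟨f, hf⟩ : S.2.Nonempty := card_pos.1 ((hstar S hS).2 ▸ Nat.ceil_pos.2 hr)
    exact mem_sup.2 ⟨f, hf, (mem_filter.1 ((hstar S hS).1 hf)).2⟩
  have hinj : Set.InjOn Prod.fst (M : Set (V × Finset (Finset V))) := fun S hS T hT hST => by
    by_contra hne
    exact disjoint_left.1 (hdisj S hS T hT hne) (hcentre S hS) (hST ▸ hcentre T hT)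
  refine ⟨M.image Prod.fst, mem_powersetCard.2 ⟨subset_univ _, card_image_of_injOn hinj⟩,
    iDisjOcc_comp_subset_image hinj _ ⟨fun S => starVtx S.2, hdisj, fun S hS => ⟨?_, ?_⟩⟩⟩
  · obtain ⟨hsub, hcard⟩ := hstar S hS
    refine hcard.symm.le.trans (card_le_card fun f hf => ?_)
    obtain ⟨hfG, hcf⟩ := mem_filter.1 (hsub hf)
    refine mem_filter.2 ⟨mem_HpEdges_decide.2 ⟨(mem_HpEdges_decide.1 hfG).1, ?_⟩, hcf⟩
    exact le_sup (f := id) hf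
  · exact Finset.sup_le fun f hf => (mem_HpEdges_decide.1 (mem_filter.1 ((hstar S hS).1 hf)).1).2

end Stars

section Percolation

variable {V : Type} [Fintype V] {p : ℝ}

instance inst_s11 (p : ℝ) : IsProbabilityMeasure (perc V p) := by
  unfold perc
  infer_instance

lemma bern_singleton_toReal (hp0 : 0 ≤ p) (hp1 : p ≤ 1) (b : Bool) :
    (bern p {b}).toReal = if b then p else 1 - p := by
  have hle : p.toNNReal ≤ 1 := Real.toNNReal_le_one.mpr hp1
  rw [bern, PMF.toMeasure_apply_singleton _ b (measurableSet_singleton b), PMF.bernoulli_apply,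
    min_eq_left hle]
  cases b
  · simp [ENNReal.toReal_sub_of_le (ENNReal.coe_le_one_iff.mpr hle) ENNReal.one_ne_top,
      Real.coe_toNNReal _ hp0]
  · simp [Real.coe_toNNReal _ hp0]

lemma perc_singleton_toReal (hp0 : 0 ≤ p) (hp1 : p ≤ 1) (ω : V → Bool) :
    (perc V p {ω}).toReal = ∏ v, if ω v then p else 1 - p := by
  rw [perc, ← Set.univ_pi_singleton, Measure.pi_pi, ENNReal.toReal_prod]
  exact prod_congr rfl fun v _ => bern_singleton_toReal hp0 hp1 (ω v)

lemma prod_ite_decide_mem_eq_bernoulliWeight (U : Finset V) :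
    (∏ v, if decide (v ∈ U) then p else 1 - p) = bernoulliWeight p univ U := by
  have : ({v | v ∉ U} : Finset V) = univ \ U := by ext; simp
  simp [prod_ite, bernoulliWeight, this]

theorem perc_toReal_eq_bernoulliProb (hp0 : 0 ≤ p) (hp1 : p ≤ 1) (A : Set (V → Bool)) :
    (perc V p A).toReal = bernoulliProb p univ {U | (fun v => decide (v ∈ U)) ∈ A} := by
  rw [← Set.coe_toFinset A, ← sum_measure_singleton,
    ENNReal.toReal_sum fun ω _ => measure_ne_top _ _, bernoulliProb]
  simp only [Set.indicator_apply, Set.mem_ofPred_eq, Set.coe_toFinset]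
  rw [← sum_filter]
  have hdecide : ∀ ω : V → Bool, (fun v => decide (v ∈ univ.filter (ω · = true))) = ω :=
    fun ω => funext fun v => by simp
  refine sum_nbij' (fun ω => univ.filter (ω · = true)) (fun U v => decide (v ∈ U))
    (fun ω hω => by simpa [hdecide] using hω) (fun U hU => by simpa using hU)
    (fun ω _ => hdecide ω) (fun U _ => by ext; simp) fun ω _ => ?_
  rw [perc_singleton_toReal hp0 hp1, ← prod_ite_decide_mem_eq_bernoulliWeight]
  simp

end Percolation

/-- Each `k`-subset of `s` accounts for `k!` terms of the multinomial expansion. -/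
lemma factorial_mul_sum_powersetCard_prod_le {ι : Type*} (s : Finset ι) {a : ι → ℝ}
    (ha : ∀ i ∈ s, 0 ≤ a i) (k : ℕ) :
    k ! * ∑ t ∈ powersetCard k s, ∏ i ∈ t, a i ≤ (∑ i ∈ s, a i) ^ k := by
  set ind : Finset ι → ι → ℕ := fun t i => if i ∈ t then 1 else 0
  have hind : ∀ t ∈ powersetCard k s, ind t ∈ piAntidiag s k := fun t ht => by
    obtain ⟨hts, rfl⟩ := mem_powersetCard.1 ht
    refine mem_piAntidiag.2 ⟨?_, fun i hi => hts (by simpa [ind] using hi)⟩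
    simp [ind, inter_eq_right.2 hts]
  have hterm : ∀ t ∈ powersetCard k s,
      (Nat.multinomial s (ind t) : ℝ) * ∏ i ∈ s, a i ^ ind t i = k ! * ∏ i ∈ t, a i := by
    intro t ht
    have hsum := (mem_piAntidiag.1 (hind t ht)).1
    have hmult : Nat.multinomial s (ind t) = k ! := by
      simpa [ind, apply_ite Nat.factorial, hsum] using Nat.multinomial_spec s (ind t)
    rw [hmult]
    congr 1
    simp only [ind, pow_ite, pow_one, pow_zero]
    rw [prod_ite_mem, inter_eq_right.2 (mem_powersetCard.1 ht).1]
  have hinj : Set.InjOn ind (powersetCard k s) := fun t _ u _ htu => by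
    ext i
    have h := congrFun htu i
    simp only [ind] at h
    split_ifs at h <;> simp_all
  calc k ! * ∑ t ∈ powersetCard k s, ∏ i ∈ t, a i
      = ∑ f ∈ (powersetCard k s).image ind, (Nat.multinomial s f : ℝ) * ∏ i ∈ s, a i ^ f i := by
        rw [sum_image hinj, mul_sum]
        exact (sum_congr rfl hterm).symm
    _ ≤ (∑ i ∈ s, a i) ^ k := by
      rw [sum_pow_eq_sum_piAntidiag]
      refine sum_le_sum_of_subset_of_nonneg (image_subset_iff.2 hind) fun f hf _ => ?_
      exact mul_nonneg (Nat.cast_nonneg _) (prod_nonneg fun i hi => pow_nonneg (ha i hi) _)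

lemma pow_div_factorial_le_stirling {x : ℝ} (hx : 0 ≤ x) {k : ℕ} (hk : k ≠ 0) :
    x ^ k / k ! ≤ 1 / √(2 * π * k) * (exp 1 * x / k) ^ k := by
  have hk' : (0 : ℝ) < k := by positivity
  calc x ^ k / k ! ≤ x ^ k / (√(2 * π * k) * (k / exp 1) ^ k) := by
        gcongr
        exact Stirling.le_factorial_stirling k
    _ = 1 / √(2 * π * k) * (exp 1 * x / k) ^ k := by
        rw [div_pow, div_pow, mul_pow]
        field_simp

/-- Lemma 3.4: upper tail estimate for the largest `r`-star matching `M_r(H_p)`. -/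
theorem statement11 (V : Type) [Fintype V] (H : Finset (Finset V))
    (p : ℝ) (hp0 : 0 ≤ p) (hp1 : p ≤ 1) (y r : ℝ) (hy : 0 < y) (hr : 0 < r) :
    (perc V p {ω | y ≤ (Mr (HpEdges H ω) r : ℝ)}).toReal ≤
      (∑ v : V, (perc V p {ω | Nat.ceil r ≤ deg (HpEdges H ω) v}).toReal) ^ (Nat.ceil y) /
        (Nat.factorial (Nat.ceil y) : ℝ) ∧
    (∑ v : V, (perc V p {ω | Nat.ceil r ≤ deg (HpEdges H ω) v}).toReal) ^ (Nat.ceil y) /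
        (Nat.factorial (Nat.ceil y) : ℝ) ≤
      (1 / Real.sqrt (2 * Real.pi * (Nat.ceil y : ℝ))) *
        (Real.exp 1 * (∑ v : V, (perc V p {ω | Nat.ceil r ≤ deg (HpEdges H ω) v}).toReal) /
          (Nat.ceil y : ℝ)) ^ (Nat.ceil y) := by
  set μ := bernoulliProb p (univ : Finset V)
  have hΦ : ∑ v, (perc V p {ω | ⌈r⌉₊ ≤ deg (HpEdges H ω) v}).toReal =
      ∑ v, μ (degreeEvent H r v) :=
    sum_congr rfl fun v _ => perc_toReal_eq_bernoulliProb hp0 hp1 _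
  rw [hΦ, perc_toReal_eq_bernoulliProb hp0 hp1]
  refine ⟨?_, pow_div_factorial_le_stirling (sum_nonneg fun v _ => bernoulliProb_nonneg hp0 hp1 _ _)
    (Nat.ceil_pos.2 hy).ne'⟩
  have hcover : {U | y ≤ (Mr (HpEdges H fun v => decide (v ∈ U)) r : ℝ)} ⊆
      ⋃ t ∈ powersetCard ⌈y⌉₊ univ, iDisjOcc t (degreeEvent H r) := fun U hU => by
    obtain ⟨t, ht, hUt⟩ := exists_mem_iDisjOcc_degreeEvent hr (Nat.ceil_le.2 (show y ≤ _ from hU))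
    exact Set.mem_biUnion ht hUt
  rw [le_div_iff₀ (by positivity), mul_comm]
  calc ⌈y⌉₊ ! * μ {U | y ≤ (Mr (HpEdges H fun v => decide (v ∈ U)) r : ℝ)}
      ≤ ⌈y⌉₊ ! * ∑ t ∈ powersetCard ⌈y⌉₊ univ, μ (iDisjOcc t (degreeEvent H r)) := by
        gcongr
        exact (bernoulliProb_mono hp0 hp1 _ hcover).trans (bernoulliProb_biUnion_le hp0 hp1 _ _ _)
    _ ≤ ⌈y⌉₊ ! * ∑ t ∈ powersetCard ⌈y⌉₊ univ, ∏ v ∈ t, μ (degreeEvent H r v) := by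
        gcongr with t
        exact bernoulliProb_iDisjOcc_le_prod hp0 hp1 _ fun v _ => isUpperSet_degreeEvent H r v
    _ ≤ (∑ v, μ (degreeEvent H r v)) ^ ⌈y⌉₊ :=
        factorial_mul_sum_powersetCard_prod_le _ (fun v _ => bernoulliProb_nonneg hp0 hp1 _ _) _

end UT
end
end

section
/- Given k ≥ 1, suppose H is a hypergraph all of whose edges have at most k vertices. Then for all β ∈ (0, 1/(32k)], r ≥ 1 and γ, t > 0, the event 𝒯(β, γ, r, t) implies X_r ≤ X ≤ X_r + t/2, where X = e(H_p) and X_r = max{e(G) : G ⊆ H_p, Δ₁(G) ≤ r}. -/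
open MeasureTheory Real
open scoped ENNReal Classical

noncomputable section

namespace UT

/-!
For `ρ = r_j`, from the top level down to `r`, take a maximum packing `M` of `ρ`-stars and
delete every edge meeting it. By maximality no vertex keeps `⌈ρ⌉` edges, so the maximum degree
halves with each round and ends up `≤ r`, while a round deletes at most
`|V(M)| Δ₁ ≤ M_ρ ⌈ρ⌉ k · 2ρ ≤ 4kρ² M_ρ` edges. On `𝒯(β, γ, r, t)` we have `ρ² M_ρ < ρ β√t s` for
`ρ < √t/s`, and `ρ² M_ρ < ρ β√t` with `ρ < β√t` for the larger `ρ` with `M_ρ ≠ 0`; summing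
these geometric sequences bounds the deleted edges by `4k (2βt + 2β²t) ≤ t/2`.
-/

section StarPacking

variable {V : Type}

def IsStarPacking (G : Finset (Finset V)) (ρ : ℝ) (M : Finset (V × Finset (Finset V))) : Prop :=
  (∀ S ∈ M, S.2 ⊆ G.filter (fun f => S.1 ∈ f) ∧ S.2.card = Nat.ceil ρ) ∧
    (∀ S ∈ M, ∀ T ∈ M, S ≠ T → Disjoint (starVtx S.2) (starVtx T.2))

lemma IsStarPacking.insert {G : Finset (Finset V)} {ρ : ℝ} {M : Finset (V × Finset (Finset V))}
    (hM : IsStarPacking G ρ M) {v : V} {W : Finset (Finset V)}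
    (hW : W ⊆ G.filter (fun f => v ∈ f)) (hWcard : W.card = Nat.ceil ρ)
    (hdisj : ∀ S ∈ M, Disjoint (starVtx W) (starVtx S.2)) :
    IsStarPacking G ρ (insert (v, W) M) := by
  refine ⟨fun S hS => ?_, fun S hS T hT hST => ?_⟩
  · rcases Finset.mem_insert.mp hS with rfl | hS
    exacts [⟨hW, hWcard⟩, hM.1 S hS]
  · rcases Finset.mem_insert.mp hS with rfl | hS <;> rcases Finset.mem_insert.mp hT with rfl | hT
    · exact absurd rfl hST
    · exact hdisj T hT
    · exact (hdisj S hS).symm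
    · exact hM.2 S hS T hT hST

lemma card_starVtx_le {k : ℕ} {W : Finset (Finset V)} (hW : ∀ e ∈ W, e.card ≤ k) :
    (starVtx W).card ≤ W.card * k := by
  classical
  rw [starVtx, Finset.sup_eq_biUnion]
  exact Finset.card_biUnion_le_card_mul W id k hW

variable [Fintype V]

lemma IsStarPacking.card_le_Mr {G : Finset (Finset V)} {ρ : ℝ} {M : Finset (V × Finset (Finset V))}
    (hM : IsStarPacking G ρ M) : M.card ≤ Mr G ρ :=
  le_csSup ⟨Fintype.card _, fun _ ⟨M', _, _, hm⟩ => hm ▸ M'.card_le_univ⟩ ⟨M, hM.1, hM.2, rfl⟩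

lemma exists_isStarPacking_card_eq_Mr (G : Finset (Finset V)) (ρ : ℝ) :
    ∃ M, IsStarPacking G ρ M ∧ M.card = Mr G ρ := by
  obtain ⟨M, h₁, h₂, hM⟩ : Mr G ρ ∈ _ := Nat.sSup_mem ⟨0, ∅, by simp, by simp, rfl⟩
    ⟨Fintype.card _, fun _ ⟨M', _, _, hm⟩ => hm ▸ M'.card_le_univ⟩
  exact ⟨M, ⟨h₁, h₂⟩, hM.symm⟩

lemma Mr_mono {G G' : Finset (Finset V)} (h : G' ⊆ G) (ρ : ℝ) : Mr G' ρ ≤ Mr G ρ := by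
  obtain ⟨M, ⟨h₁, h₂⟩, hM⟩ := exists_isStarPacking_card_eq_Mr G' ρ
  exact hM ▸ IsStarPacking.card_le_Mr
    ⟨fun S hS => ⟨(h₁ S hS).1.trans (Finset.filter_subset_filter _ h), (h₁ S hS).2⟩, h₂⟩

/-- Otherwise `⌈ρ⌉` of the remaining edges at `v` would form a star disjoint from `M`. -/
lemma deg_filter_disjoint_lt {G : Finset (Finset V)} {ρ : ℝ} (hρ : 0 < ρ)
    {M : Finset (V × Finset (Finset V))} (hM : IsStarPacking G ρ M) (hMcard : M.card = Mr G ρ)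
    (v : V) : deg (G.filter fun e => Disjoint e (M.sup fun S => starVtx S.2)) v < Nat.ceil ρ := by
  set U := M.sup fun S => starVtx S.2
  by_contra! hdeg
  obtain ⟨W, hWsub, hWcard⟩ := Finset.exists_subset_card_eq hdeg
  have hW : ∀ f ∈ W, (f ∈ G ∧ Disjoint f U) ∧ v ∈ f := fun f hf => by
    simpa only [deg, Finset.mem_filter] using hWsub hf
  have hWU : Disjoint (starVtx W) U := Finset.disjoint_sup_left.mpr fun f hf => (hW f hf).1.2
  have hvW : v ∈ starVtx W := by
    obtain ⟨f, hf⟩ := Finset.card_pos.mp (hWcard ▸ Nat.ceil_pos.mpr hρ)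
    exact Finset.mem_sup.mpr ⟨f, hf, (hW f hf).2⟩
  have hSU : ∀ S ∈ M, starVtx S.2 ⊆ U := fun S hS => Finset.le_sup (f := fun S => starVtx S.2) hS
  have hvM : (v, W) ∉ M := fun hmem => Finset.disjoint_left.mp hWU hvW (hSU _ hmem hvW)
  have hbigger := (hM.insert (fun f hf => Finset.mem_filter.mpr ⟨(hW f hf).1.1, (hW f hf).2⟩)
    hWcard fun S hS => hWU.mono_right (hSU S hS)).card_le_Mr
  rw [Finset.card_insert_of_notMem hvM, hMcard] at hbigger
  omega

lemma card_filter_not_disjoint_le (G : Finset (Finset V)) (U : Finset V) :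
    (G.filter fun e => ¬Disjoint e U).card ≤ U.card * maxDeg G := by
  classical
  calc (G.filter fun e => ¬Disjoint e U).card
      ≤ (U.biUnion fun u => G.filter fun e => u ∈ e).card := by
        refine Finset.card_le_card fun e he => ?_
        obtain ⟨he, hdisj⟩ := Finset.mem_filter.mp he
        obtain ⟨u, hue, huU⟩ := Finset.not_disjoint_iff.mp hdisj
        exact Finset.mem_biUnion.mpr ⟨u, huU, Finset.mem_filter.mpr ⟨he, hue⟩⟩
    _ ≤ U.card * maxDeg G :=
        Finset.card_biUnion_le_card_mul _ _ _ fun u _ => Finset.le_sup (f := deg G) (Finset.mem_univ u)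

lemma exists_subset_deg_lt_ceil {k : ℕ} {G : Finset (Finset V)} (hG : ∀ e ∈ G, e.card ≤ k)
    {ρ : ℝ} (hρ : 0 < ρ) :
    ∃ G' ⊆ G, (∀ v, deg G' v < Nat.ceil ρ) ∧
      G.card ≤ G'.card + Mr G ρ * Nat.ceil ρ * k * maxDeg G := by
  obtain ⟨M, hM, hMcard⟩ := exists_isStarPacking_card_eq_Mr G ρ
  have hU : (M.sup fun S => starVtx S.2).card ≤ M.card * (Nat.ceil ρ * k) := by
    classical
    rw [Finset.sup_eq_biUnion]
    refine Finset.card_biUnion_le_card_mul _ _ _ fun S hS => ?_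
    rw [← (hM.1 S hS).2]
    exact card_starVtx_le fun e he => hG e (Finset.mem_filter.mp ((hM.1 S hS).1 he)).1
  set U := M.sup fun S => starVtx S.2
  refine ⟨G.filter fun e => Disjoint e U, Finset.filter_subset _ _,
    deg_filter_disjoint_lt hρ hM hMcard, ?_⟩
  calc G.card = (G.filter fun e => Disjoint e U).card + (G.filter fun e => ¬Disjoint e U).card :=
        (Finset.card_filter_add_card_filter_not _).symm
    _ ≤ (G.filter fun e => Disjoint e U).card + M.card * (Nat.ceil ρ * k) * maxDeg G :=
        Nat.add_le_add_left ((card_filter_not_disjoint_le G U).trans (Nat.mul_le_mul_right _ hU)) _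
    _ = _ := by rw [hMcard]; ring

end StarPacking

section DegreeReduction

variable {V : Type} [Fintype V]

lemma maxDeg_le {G : Finset (Finset V)} {a : ℝ} (ha : 0 ≤ a) (h : ∀ v, (deg G v : ℝ) ≤ a) :
    (maxDeg G : ℝ) ≤ a :=
  (Nat.cast_le.mpr (Finset.sup_le fun v _ => Nat.le_floor (h v))).trans (Nat.floor_le ha)

lemma exists_subset_deg_lt_of_deg_lt_two_pow_mul {k : ℕ} {r : ℝ} (hr : 1 ≤ r) (n : ℕ) :
    ∀ G : Finset (Finset V), (∀ e ∈ G, e.card ≤ k) → (∀ v, (deg G v : ℝ) < 2 ^ n * r) →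
      ∃ G' ⊆ G, (∀ v, (deg G' v : ℝ) < r) ∧
        (G.card : ℝ) ≤ G'.card + 4 * k * ∑ j ∈ Finset.range n, (2 ^ j * r) ^ 2 * Mr G (2 ^ j * r) := by
  induction n with
  | zero => exact fun G _ hdeg => ⟨G, subset_rfl, by simpa using hdeg, by simp⟩
  | succ n ih =>
    intro G hG hdeg
    set ρ : ℝ := 2 ^ n * r
    have hρ : 1 ≤ ρ := one_le_mul_of_one_le_of_one_le (one_le_pow₀ one_le_two) hr
    obtain ⟨G₁, hG₁, hdeg₁, hcard₁⟩ := exists_subset_deg_lt_ceil hG (by linarith : 0 < ρ)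
    obtain ⟨G', hG', hdeg', hcard'⟩ :=
      ih G₁ (fun e he => hG e (hG₁ he)) fun v => Nat.lt_ceil.mp (hdeg₁ v)
    refine ⟨G', hG'.trans hG₁, hdeg', ?_⟩
    have hceil : (Nat.ceil ρ : ℝ) ≤ 2 * ρ := Nat.ceil_le_two_mul (by linarith)
    have hmaxDeg : (maxDeg G : ℝ) ≤ 2 * ρ :=
      maxDeg_le (by linarith) fun v => (hdeg v).le.trans_eq (by rw [pow_succ]; ring)
    have hround : (G.card : ℝ) ≤ G₁.card + 4 * k * (ρ ^ 2 * Mr G ρ) := by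
      have hcard₁' : (G.card : ℝ) ≤ G₁.card + Mr G ρ * Nat.ceil ρ * k * maxDeg G := by
        exact_mod_cast hcard₁
      have : (Mr G ρ : ℝ) * Nat.ceil ρ * k * maxDeg G ≤ Mr G ρ * (2 * ρ) * k * (2 * ρ) := by
        gcongr
      nlinarith
    have hmono : ∑ j ∈ Finset.range n, (2 ^ j * r) ^ 2 * (Mr G₁ (2 ^ j * r) : ℝ) ≤
        ∑ j ∈ Finset.range n, (2 ^ j * r) ^ 2 * (Mr G (2 ^ j * r) : ℝ) := by
      gcongr with j
      exact Mr_mono hG₁ _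
    rw [Finset.sum_range_succ]
    nlinarith

lemma exists_subset_deg_le_card_le {k : ℕ} {G : Finset (Finset V)} (hG : ∀ e ∈ G, e.card ≤ k)
    {r : ℝ} (hr : 1 ≤ r) :
    ∃ G' ⊆ G, (∀ v, (deg G' v : ℝ) ≤ r) ∧
      (G.card : ℝ) ≤ G'.card +
        4 * k * ∑ j ∈ Finset.range G.card, (2 ^ j * r) ^ 2 * Mr G (2 ^ j * r) := by
  have hdeg : ∀ v, (deg G v : ℝ) < 2 ^ G.card * r := fun v => by
    have hcard : deg G v < 2 ^ G.card := (Finset.card_filter_le _ _).trans_lt Nat.lt_two_pow_self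
    calc (deg G v : ℝ) < 2 ^ G.card := by exact_mod_cast hcard
      _ ≤ 2 ^ G.card * r := le_mul_of_one_le_right (by positivity) hr
  obtain ⟨G', hG', hdeg', hcard⟩ := exists_subset_deg_lt_of_deg_lt_two_pow_mul hr _ G hG hdeg
  exact ⟨G', hG', fun v => (hdeg' v).le, hcard⟩

end DegreeReduction

lemma sum_two_pow_mul_le {S : Finset ℕ} {r B : ℝ} (hr : 0 ≤ r) (hB : 0 ≤ B)
    (h : ∀ j ∈ S, 2 ^ j * r < B) : ∑ j ∈ S, 2 ^ j * r ≤ 2 * B := by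
  rcases S.eq_empty_or_nonempty with rfl | hS
  · simpa using hB
  set m := S.max' hS
  have hgeom : ∑ j ∈ S, (2 : ℝ) ^ j ≤ 2 * 2 ^ m := by
    have := Nat.geomSum_lt (n := m + 1) le_rfl fun j hj => Nat.lt_succ_of_le (S.le_max' j hj)
    rw [← pow_succ']
    exact_mod_cast this.le
  calc ∑ j ∈ S, 2 ^ j * r = (∑ j ∈ S, (2 : ℝ) ^ j) * r := (Finset.sum_mul _ _ _).symm
    _ ≤ 2 * 2 ^ m * r := mul_le_mul_of_nonneg_right hgeom hr
    _ ≤ 2 * B := by linarith [h m (S.max'_mem hS)]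

lemma sum_sq_mul_le {S : Finset ℕ} {r A B : ℝ} {x : ℕ → ℝ} (hr : 0 ≤ r) (hA : 0 ≤ A)
    (hB : 0 ≤ B) (hlt : ∀ j ∈ S, 2 ^ j * r < B) (hx : ∀ j ∈ S, 2 ^ j * r * x j ≤ A) :
    ∑ j ∈ S, (2 ^ j * r) ^ 2 * x j ≤ 2 * A * B :=
  calc ∑ j ∈ S, (2 ^ j * r) ^ 2 * x j = ∑ j ∈ S, 2 ^ j * r * (2 ^ j * r * x j) := by
        simp only [sq, mul_assoc]
    _ ≤ ∑ j ∈ S, 2 ^ j * r * A := by gcongr with j hj; exact hx j hj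
    _ = A * ∑ j ∈ S, 2 ^ j * r := by rw [Finset.mul_sum]; simp only [mul_comm A]
    _ ≤ A * (2 * B) := by gcongr; exact sum_two_pow_mul_le hr hB hlt
    _ = 2 * A * B := by ring

lemma four_mul_sum_le_half_of_lt {k : ℕ} (hk : 1 ≤ k) {β : ℝ} (hβ0 : 0 < β)
    (hβ1 : β ≤ 1 / (32 * (k : ℝ))) {r s t : ℝ} (hr : 0 < r) (ht : 0 < t) (m : ℕ → ℕ)
    (hsmall : ∀ j : ℕ, 2 ^ j * r < √t / s → (m j : ℝ) < β * √t * s / (2 ^ j * r))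
    (hlarge : ∀ j : ℕ, √t / s ≤ 2 ^ j * r → (m j : ℝ) < β * √t / (2 ^ j * r)) (n : ℕ) :
    4 * k * ∑ j ∈ Finset.range n, (2 ^ j * r) ^ 2 * (m j : ℝ) ≤ t / 2 := by
  have hkβ : 32 * k * β ≤ 1 := by
    have := (le_div_iff₀ (by positivity)).mp hβ1
    linarith
  have hρ : ∀ j : ℕ, 0 < (2 : ℝ) ^ j * r := fun j => by positivity
  have hst : 0 < √t := Real.sqrt_pos.mpr ht
  rw [← Finset.sum_filter_add_sum_filter_not _ fun j => 2 ^ j * r < √t / s]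
  have hlow : ∑ j ∈ (Finset.range n).filter (fun j => 2 ^ j * r < √t / s),
      (2 ^ j * r) ^ 2 * (m j : ℝ) ≤ 2 * β * t := by
    rcases ((Finset.range n).filter fun j => 2 ^ j * r < √t / s).eq_empty_or_nonempty
      with hempty | ⟨j₀, hj₀⟩
    · rw [hempty, Finset.sum_empty]
      positivity
    have hs : 0 < s :=
      (div_pos_iff_of_pos_left hst).mp ((hρ j₀).trans (Finset.mem_filter.mp hj₀).2)
    calc _ ≤ 2 * (β * √t * s) * (√t / s) :=
          sum_sq_mul_le hr.le (by positivity) (by positivity)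
            (fun j hj => (Finset.mem_filter.mp hj).2)
            (fun j hj => by
              have := hsmall j (Finset.mem_filter.mp hj).2
              rw [lt_div_iff₀ (hρ j)] at this
              linarith)
      _ = 2 * β * t := by
        field_simp
        rw [Real.sq_sqrt ht.le]
  have hhigh : ∑ j ∈ (Finset.range n).filter (fun j => ¬2 ^ j * r < √t / s),
      (2 ^ j * r) ^ 2 * (m j : ℝ) ≤ 2 * β ^ 2 * t := by
    rw [← Finset.sum_filter_ne_zero]
    have hmem : ∀ j ∈ ((Finset.range n).filter (fun j => ¬2 ^ j * r < √t / s)).filter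
        (fun j => (2 ^ j * r) ^ 2 * (m j : ℝ) ≠ 0), 2 ^ j * r * (m j : ℝ) < β * √t := by
      intro j hj
      obtain ⟨hj, -⟩ := Finset.mem_filter.mp hj
      have := hlarge j (not_lt.mp (Finset.mem_filter.mp hj).2)
      rwa [lt_div_iff₀ (hρ j), mul_comm] at this
    calc _ ≤ 2 * (β * √t) * (β * √t) :=
          sum_sq_mul_le hr.le (by positivity) (by positivity)
            (fun j hj => by
              have hm : (1 : ℝ) ≤ m j := Nat.one_le_cast.mpr <| Nat.one_le_iff_ne_zero.mpr <|
                Nat.cast_ne_zero.mp (right_ne_zero_of_mul (Finset.mem_filter.mp hj).2)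
              nlinarith [hmem j hj, hρ j])
            (fun j hj => (hmem j hj).le)
      _ = 2 * β ^ 2 * t := by linear_combination 2 * β ^ 2 * Real.mul_self_sqrt ht.le
  have hβ : β ≤ 1 := by
    have : (1 : ℝ) ≤ k := by exact_mod_cast hk
    nlinarith
  calc 4 * (k : ℝ) * (_ + _) ≤ 4 * k * (2 * β * t + 2 * β ^ 2 * t) := by gcongr
    _ = 32 * k * β * (t * (1 + β)) / 4 := by ring
    _ ≤ 1 * (t * (1 + 1)) / 4 := by gcongr
    _ = t / 2 := by ring

section MaxSubgraph

variable {V : Type} {H : Finset (Finset V)} {r : ℝ} {ω : V → Bool}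

lemma HpEdges_subset : HpEdges H ω ⊆ H :=
  Finset.filter_subset _ _

lemma Xr_le_XE (hr : 0 ≤ r) : Xr H r ω ≤ XE H ω :=
  csSup_le ⟨0, ∅, Finset.empty_subset _, fun v => by simpa [deg] using hr, by simp⟩ <| by
    rintro z ⟨G, hG, -, rfl⟩
    unfold XE
    exact_mod_cast Finset.card_le_card hG

end MaxSubgraph

theorem statement13_general (k : ℕ) (hk : 1 ≤ k) (V : Type) [Fintype V] (H : Finset (Finset V))
    (hH : ∀ e ∈ H, e.card ≤ k) (p : ℝ)
    (β : ℝ) (hβ0 : 0 < β) (hβ1 : β ≤ 1/(32 * (k:ℝ)))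
    (r : ℝ) (hr : 1 ≤ r) (γ t : ℝ) (ht : 0 < t)
    (ω : V → Bool) (hT : eventT H p β γ r t ω) :
    Xr H r ω ≤ XE H ω ∧ XE H ω ≤ Xr H r ω + t/2 := by
  refine ⟨Xr_le_XE (by linarith), ?_⟩
  obtain ⟨G, hG, hdeg, hcard⟩ :=
    exists_subset_deg_le_card_le (G := HpEdges H ω) (fun e he => hH e (HpEdges_subset he)) hr
  have herror := four_mul_sum_le_half_of_lt hk hβ0 hβ1 (by linarith) ht _ hT.1 hT.2
    (HpEdges H ω).card
  have hG_le := card_le_Xr hG hdeg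
  rw [XE]
  linarith

/-- Lemma 3.6: on the event `𝒯(β,γ,r,t)` we have `X_r ≤ X ≤ X_r + t/2`. -/
theorem statement13 (k : ℕ) (hk : 1 ≤ k) (V : Type) [Fintype V] (H : Finset (Finset V))
    (hH : ∀ e ∈ H, e.card ≤ k) (p : ℝ) (hp0 : 0 ≤ p) (hp1 : p ≤ 1)
    (β : ℝ) (hβ0 : 0 < β) (hβ1 : β ≤ 1/(32 * (k:ℝ)))
    (r : ℝ) (hr : 1 ≤ r) (γ t : ℝ) (hγ : 0 < γ) (ht : 0 < t)
    (ω : V → Bool) (hT : eventT H p β γ r t ω) :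
    Xr H r ω ≤ XE H ω ∧ XE H ω ≤ Xr H r ω + t/2 :=
  statement13_general k hk V H hH p β hβ0 hβ1 r hr γ t ht ω hT

end UT
end
end
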